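/- (Randomized coordinate descent, least-squares version, one-step expected decrease.) Let A be a p×m real matrix with full column rank, B an n×q real matrix with full row rank (so B† = Bᵀ(BBᵀ)⁻¹), and X*, X m×n real matrices with C = AX*B. For i ∈ {1,…,m} set p_i = ‖A_{:,i}‖₂²/‖A‖_F² and define X⁺_i = X − e_i(A_{:,i})ᵀ(AXB − C)B†/‖A_{:,i}‖₂², where e_i is the i-th standard basis column vector of ℝᵐ. Then Σ_{i=1}^{m} p_i ‖X⁺_i − X*‖²_{F(AᵀA)} ≤ (1 − λ_min(AᵀA)/‖A‖_F²)·‖X − X*‖²_{F(AᵀA)}, where ‖M‖²_{F(AᵀA)} = Tr(MᵀAᵀAM). -/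

import Mathlib

/-!
Write `G = AᵀA` and `E = X - X*`. Since `BB† = 1`, the update on coordinate `i` moves the
error to `E - eᵢ (GE)ᵢ / Gᵢᵢ`, and expanding the `G`-weighted norm shows this lowers `‖E‖²_G`
by exactly `‖(GE)ᵢ‖² / Gᵢᵢ`. Averaging with the weights `Gᵢᵢ / tr G`, the expected decrease
is `‖GE‖²_F / tr G = tr(EᵀG²E) / tr G`, and `G² - λ_min G` is positive semidefinite
(diagonalise `G`), so this is at least `λ_min ‖E‖²_G / tr G`.
-/

open Matrix
open scoped ComplexOrder

namespace Matrix

variable {m n p q : Type*} [Fintype m] [Fintype n] [Fintype p] [Fintype q]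

theorem isUnit_of_rank_eq_card {K : Type*} [Field K] [DecidableEq n] {M : Matrix n n K}
    (h : M.rank = Fintype.card n) : IsUnit M := by
  rw [← mulVec_surjective_iff_isUnit, ← coe_mulVecLin, ← LinearMap.range_eq_top]
  apply Submodule.eq_top_of_finrank_eq
  rw [← rank, h, Module.finrank_fintype_fun_eq_card]

theorem mul_transpose_mul_inv_eq_one {R : Type*} [Field R] [LinearOrder R]
    [IsStrictOrderedRing R] [DecidableEq n] {B : Matrix n q R} (hB : B.rank = Fintype.card n) :
    B * (Bᵀ * (B * Bᵀ)⁻¹) = 1 := by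
  have hBBt : IsUnit (B * Bᵀ) := isUnit_of_rank_eq_card (by rw [rank_self_mul_transpose, hB])
  rw [← Matrix.mul_assoc, mul_nonsing_inv _ ((isUnit_iff_isUnit_det _).mp hBBt)]

theorem vecMul_mul_mul_sub_mul_mul_vecMul_of_mul_eq_one {R : Type*} [CommRing R] [DecidableEq n]
    {B : Matrix n q R} {B' : Matrix q n R} (hB : B * B' = 1) (A : Matrix p m R)
    (X Y : Matrix m n R) (v : p → R) :
    (v ᵥ* (A * X * B - A * Y * B)) ᵥ* B' = v ᵥ* (A * (X - Y)) := by
  rw [vecMul_vecMul, ← Matrix.sub_mul, Matrix.mul_assoc, hB, Matrix.mul_one, ← Matrix.mul_sub]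

omit [Fintype n] in
theorem transpose_mul_self_mul_apply_eq_zero {R : Type*} [CommRing R] [LinearOrder R]
    [IsStrictOrderedRing R] {A : Matrix p m R} (E : Matrix m n R) {i : m}
    (h : (Aᵀ * A) i i = 0) : (Aᵀ * A * E) i = 0 := by
  have hcol : Aᵀ i = 0 := dotProduct_self_eq_zero.mp h
  rw [Matrix.mul_assoc, mul_apply_eq_vecMul, hcol, zero_vecMul]

theorem sum_dotProduct_self_eq_trace {R : Type*} [CommSemiring R] (M : Matrix m n R) :
    ∑ i, M i ⬝ᵥ M i = trace (Mᵀ * M) := by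
  simp only [dotProduct, trace, diag, mul_apply, transpose_apply]
  exact Finset.sum_comm

section RowUpdate

variable {R : Type*} [CommRing R] [DecidableEq m]

theorem trace_transpose_vecMulVec_single_mul (i : m) (v : n → R) (N : Matrix m n R) :
    trace ((vecMulVec (Pi.single i 1) v)ᵀ * N) = v ⬝ᵥ N i := by
  simp [trace, mul_apply, vecMulVec_apply, Pi.single_apply, dotProduct]

omit [Fintype n] in
theorem mul_vecMulVec_single_apply (G : Matrix m m R) (i : m) (v : n → R) :
    (G * vecMulVec (Pi.single i 1) v) i = G i i • v := by
  rw [mul_apply_eq_vecMul, vecMul_vecMulVec, dotProduct_single_one]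

theorem trace_transpose_sub_smul_vecMulVec_mul_sub {G : Matrix m m R} (hG : Gᵀ = G)
    (E : Matrix m n R) (i : m) (c : R) :
    trace ((E - c • vecMulVec (Pi.single i 1) ((G * E) i))ᵀ * G *
        (E - c • vecMulVec (Pi.single i 1) ((G * E) i))) =
      trace (Eᵀ * G * E) - 2 * c * ((G * E) i ⬝ᵥ (G * E) i) +
        c ^ 2 * G i i * ((G * E) i ⬝ᵥ (G * E) i) := by
  set r := (G * E) i
  set M := vecMulVec (Pi.single i 1) r
  have hMGE : trace (Mᵀ * (G * E)) = r ⬝ᵥ r := trace_transpose_vecMulVec_single_mul i _ _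
  have hEGM : trace (Eᵀ * (G * M)) = r ⬝ᵥ r := by
    rw [← trace_transpose, transpose_mul, transpose_mul, hG, transpose_transpose,
      Matrix.mul_assoc, hMGE]
  have hMGM : trace (Mᵀ * (G * M)) = G i i * (r ⬝ᵥ r) := by
    rw [trace_transpose_vecMulVec_single_mul, mul_vecMulVec_single_apply, dotProduct_smul,
      smul_eq_mul]
  have expand : (E - c • M)ᵀ * G * (E - c • M) = Eᵀ * G * E - c • (Mᵀ * (G * E)) -
      c • (Eᵀ * (G * M)) + c ^ 2 • (Mᵀ * (G * M)) := by
    simp only [transpose_sub, transpose_smul, Matrix.sub_mul, Matrix.mul_sub, smul_mul,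
      Matrix.mul_smul, Matrix.mul_assoc]
    module
  rw [expand, trace_add, trace_sub, trace_sub, trace_smul, trace_smul, trace_smul, hMGE, hEGM,
    hMGM]
  simp only [smul_eq_mul]
  ring

end RowUpdate

/-- With `G = AᵀA` and `E = X - X*`, the error `X⁺ - X*` after an RCD step on coordinate
`i`: the residual `(A_{:,i})ᵀ(AXB - C)B†` of the update is row `i` of `GE` once `BB† = 1`.
If column `i` of `A` vanishes then `G i i = 0`, and `1 / 0 = 0` makes the step the identity. -/
def coordStep {R : Type*} [Field R] [DecidableEq m] (G : Matrix m m R) (E : Matrix m n R)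
    (i : m) : Matrix m n R :=
  E - (1 / G i i) • vecMulVec (Pi.single i 1) ((G * E) i)

theorem diag_mul_trace_transpose_coordStep_mul_coordStep {R : Type*} [Field R]
    [LinearOrder R] [IsStrictOrderedRing R] [DecidableEq m] (A : Matrix p m R)
    (E : Matrix m n R) (i : m) :
    (Aᵀ * A) i i *
        trace ((coordStep (Aᵀ * A) E i)ᵀ * (Aᵀ * A) * coordStep (Aᵀ * A) E i) =
      (Aᵀ * A) i i * trace (Eᵀ * (Aᵀ * A) * E) - (Aᵀ * A * E) i ⬝ᵥ (Aᵀ * A * E) i := by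
  rw [coordStep, trace_transpose_sub_smul_vecMulVec_mul_sub (by simp) E i]
  by_cases hi : (Aᵀ * A) i i = 0
  · simp [hi, transpose_mul_self_mul_apply_eq_zero E hi]
  · field_simp
    ring

theorem sum_diag_div_trace_mul_trace_coordStep {R : Type*} [Field R] [LinearOrder R]
    [IsStrictOrderedRing R] [DecidableEq m] (A : Matrix p m R) (E : Matrix m n R) :
    ∑ i, (Aᵀ * A) i i / trace (Aᵀ * A) *
        trace ((coordStep (Aᵀ * A) E i)ᵀ * (Aᵀ * A) * coordStep (Aᵀ * A) E i) =
      (trace (Aᵀ * A) * trace (Eᵀ * (Aᵀ * A) * E) - trace ((Aᵀ * A * E)ᵀ * (Aᵀ * A * E))) /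
        trace (Aᵀ * A) := by
  simp only [div_mul_eq_mul_div, ← Finset.sum_div,
    diag_mul_trace_transpose_coordStep_mul_coordStep, Finset.sum_sub_distrib, ← Finset.sum_mul,
    sum_dotProduct_self_eq_trace]
  rfl

theorem PosSemidef.mul_self_sub_smul {𝕜 : Type*} [RCLike 𝕜] [DecidableEq n]
    {G : Matrix n n 𝕜} (hG : G.PosSemidef) {μ : ℝ} (hμ : ∀ k, μ ≤ hG.1.eigenvalues k) :
    (G * G - μ • G).PosSemidef := by
  set U : Matrix n n 𝕜 := (hG.1.eigenvectorUnitary : Matrix n n 𝕜)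
  set D : Matrix n n 𝕜 := diagonal (RCLike.ofReal ∘ hG.1.eigenvalues)
  have hUU : star U * U = 1 := Unitary.coe_star_mul_self hG.1.eigenvectorUnitary
  have hG' : G = U * D * star U := by
    simpa [U, D] using hG.1.spectral_theorem
  have hconj : G * G - μ • G = U * (D * D - μ • D) * star U := by
    rw [hG']
    calc U * D * star U * (U * D * star U) - μ • (U * D * star U)
        = U * (D * (star U * U) * D - μ • D) * star U := by
          simp only [Matrix.mul_sub, Matrix.sub_mul, Matrix.mul_smul, Matrix.smul_mul,
            Matrix.mul_assoc]
      _ = U * (D * D - μ • D) * star U := by rw [hUU, Matrix.mul_one]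
  have hdiag : D * D - μ • D = diagonal fun k ↦
      ((hG.1.eigenvalues k * (hG.1.eigenvalues k - μ) : ℝ) : 𝕜) := by
    ext k l
    by_cases hkl : k = l <;> simp [D, hkl, RCLike.real_smul_eq_coe_mul]
    ring
  rw [hconj, Unitary.isUnit_coe.posSemidef_star_right_conjugate_iff, hdiag,
    posSemidef_diagonal_iff]
  exact fun k ↦
    RCLike.ofReal_nonneg.mpr (mul_nonneg (hG.eigenvalues_nonneg k) (sub_nonneg.mpr (hμ k)))

theorem PosSemidef.mul_trace_transpose_mul_mul_le [DecidableEq n] {G : Matrix n n ℝ}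
    (hG : G.PosSemidef) {μ : ℝ} (hμ : ∀ k, μ ≤ hG.1.eigenvalues k) (E : Matrix n m ℝ) :
    μ * trace (Eᵀ * G * E) ≤ trace ((G * E)ᵀ * (G * E)) := by
  have hGt : Gᵀ = G := by simpa using hG.1.eq
  have h := ((hG.mul_self_sub_smul hμ).conjTranspose_mul_mul_same E).trace_nonneg
  rw [conjTranspose_eq_transpose_of_trivial, Matrix.mul_sub, Matrix.sub_mul, trace_sub,
    Matrix.mul_smul, Matrix.smul_mul, trace_smul, smul_eq_mul] at h
  rw [transpose_mul, hGt]
  simp only [Matrix.mul_assoc] at h ⊢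
  linarith

end Matrix

theorem stmt_17_general {m n p q : ℕ}
    (A : Matrix (Fin p) (Fin m) ℝ)
    (B : Matrix (Fin n) (Fin q) ℝ) (hB : B.rank = n)
    (Xs X : Matrix (Fin m) (Fin n) ℝ) :
    let C : Matrix (Fin p) (Fin q) ℝ := A * Xs * B
    let Bd : Matrix (Fin q) (Fin n) ℝ := Bᵀ * (B * Bᵀ)⁻¹
    let Xp : Fin m → Matrix (Fin m) (Fin n) ℝ := fun i =>
      X - (1 / (Aᵀ i ⬝ᵥ Aᵀ i)) •
        vecMulVec (Pi.single i 1) ((Aᵀ i ᵥ* (A * X * B - C)) ᵥ* Bd)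
    ∀ (hAA : (Aᵀ * A).IsHermitian),
      ∑ i, ((Aᵀ i ⬝ᵥ Aᵀ i) / Matrix.trace (Aᵀ * A)) *
          Matrix.trace ((Xp i - Xs)ᵀ * (Aᵀ * A) * (Xp i - Xs))
      ≤ (1 - (⨅ k, hAA.eigenvalues k) / Matrix.trace (Aᵀ * A)) *
          Matrix.trace ((X - Xs)ᵀ * (Aᵀ * A) * (X - Xs)) := by
  intro C Bd Xp hAA
  set G := Aᵀ * A
  set E := X - Xs
  set μ := ⨅ k, hAA.eigenvalues k
  have hG : G.PosSemidef := by simpa [G] using posSemidef_conjTranspose_mul_self A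
  have hBd : B * Bd = 1 := mul_transpose_mul_inv_eq_one (by simpa using hB)
  have hstep : ∀ i, Xp i - Xs = coordStep G E i := fun i ↦ by
    rw [coordStep, Matrix.mul_assoc, mul_apply_eq_vecMul,
      ← vecMul_mul_mul_sub_mul_mul_vecMul_of_mul_eq_one hBd]
    exact sub_right_comm _ _ _
  have hμ : μ * trace (Eᵀ * G * E) ≤ trace ((G * E)ᵀ * (G * E)) :=
    hG.mul_trace_transpose_mul_mul_le (fun k ↦ ciInf_le (Set.finite_range _).bddBelow k) E
  have hT : 0 ≤ trace (Eᵀ * G * E) := by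
    simpa using (hG.conjTranspose_mul_mul_same E).trace_nonneg
  calc ∑ i, (G i i / trace G) * trace ((Xp i - Xs)ᵀ * G * (Xp i - Xs))
      = (trace G * trace (Eᵀ * G * E) - trace ((G * E)ᵀ * (G * E))) / trace G := by
        simp only [hstep]
        exact sum_diag_div_trace_mul_trace_coordStep A E
    _ ≤ (1 - μ / trace G) * trace (Eᵀ * G * E) := by
        rcases hG.trace_nonneg.eq_or_lt with hτ0 | hτpos
        · simp [← hτ0, hT]
        · rw [one_sub_div hτpos.ne', div_mul_eq_mul_div]
          gcongr
          nlinarith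

/-- randomized coordinate descent, least-squares version (RCD),
one-step expected decrease in the `AᵀA`-weighted Frobenius norm. -/
theorem stmt_17 {m n p q : ℕ}
    (A : Matrix (Fin p) (Fin m) ℝ) (hA : A.rank = m)
    (B : Matrix (Fin n) (Fin q) ℝ) (hB : B.rank = n)
    (Xs X : Matrix (Fin m) (Fin n) ℝ) :
    let C : Matrix (Fin p) (Fin q) ℝ := A * Xs * B
    let Bd : Matrix (Fin q) (Fin n) ℝ := Bᵀ * (B * Bᵀ)⁻¹
    let Xp : Fin m → Matrix (Fin m) (Fin n) ℝ := fun i =>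
      X - (1 / (Aᵀ i ⬝ᵥ Aᵀ i)) •
        vecMulVec (Pi.single i 1) ((Aᵀ i ᵥ* (A * X * B - C)) ᵥ* Bd)
    ∀ (hAA : (Aᵀ * A).IsHermitian),
      ∑ i, ((Aᵀ i ⬝ᵥ Aᵀ i) / Matrix.trace (Aᵀ * A)) *
          Matrix.trace ((Xp i - Xs)ᵀ * (Aᵀ * A) * (Xp i - Xs))
      ≤ (1 - (⨅ k, hAA.eigenvalues k) / Matrix.trace (Aᵀ * A)) *
          Matrix.trace ((X - Xs)ᵀ * (Aᵀ * A) * (X - Xs)) :=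
  stmt_17_general A B hB Xs X
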